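/- arXiv:2007.09309 — 5 statements merged into one kernel-verified Lean document; each statement's English description precedes it below -/
import Mathlib

section
/- The unforced Ultradian glucose-insulin model has exactly one equilibrium (I_p, I_i, G, h₁, h₂, h₃) with G ≥ 0, and at this equilibrium G > 0, I_p > 0 and I_i > 0. Moreover, at any equilibrium the relations I_i = c·I_p with c = (E/V_p)/(E/V_i + 1/t_i) and f₁(G) = I_p/t_p + I_i/t_i hold, so that I_p = f₁(G)/(1/t_p + c/t_i), and G is the unique nonnegative root of the strictly increasing function G ↦ f₂(G) + f₃(c·I_p(G))·G − f₄(I_p(G)) − I₀. -/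
/-! At an equilibrium the delay compartments all equal `I_p`, and the two insulin equations are
linear in `(I_p, I_i)`; eliminating them leaves the single glucose equation `g(G) = 0`. On
`G ≥ 0` the function `g` is strictly increasing: `f₂` is, and `f₁`, hence `I_p(G)`, increases, so
the uptake `f₃(c I_p(G)) G` increases while the hepatic production `f₄(I_p(G))` decreases. As
`g(0) = -f₄ - I₀ < 0` and `g(G) ≥ U₀ G / (C₃ V_g) - R_g - I₀`, the intermediate value theorem
gives exactly one nonnegative root. -/

/-- Rate of insulin production. -/
noncomputable def f1 (Rm Vg C1 a1 G : ℝ) : ℝ :=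
  Rm / (1 + Real.exp (-G / (Vg * C1) + a1))

/-- Insulin-independent glucose utilization. -/
noncomputable def f2 (Ub C2 Vg G : ℝ) : ℝ :=
  Ub * (1 - Real.exp (-G / (C2 * Vg)))

/-- Insulin-dependent glucose utilization factor (with `(κx)^β` a real power). -/
noncomputable def f3 (C3 Vg U0 Um κ β x : ℝ) : ℝ :=
  (1 / (C3 * Vg)) * (U0 + (Um - U0) * (κ * x) ^ β / (1 + (κ * x) ^ β))

/-- Delayed insulin-dependent glucose production. -/
noncomputable def f4 (Rg α C5 Vp x : ℝ) : ℝ :=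
  Rg / (1 + Real.exp (α * (x / (C5 * Vp) - 1)))

/-- The state `(Ip, Ii, G, h1, h2, h3)` is an equilibrium of the unforced
Ultradian glucose-insulin model with delay parameter `td`: all six right-hand
sides of the ODE system vanish. -/
noncomputable def IsEquilibrium
    (Vp Vi Vg E tp ti td Rm a1 C1 C2 C3 C4 C5 Ub U0 Um Rg α β I0
      Ip Ii G h1 h2 h3 : ℝ) : Prop :=
  f1 Rm Vg C1 a1 G - E * (Ip / Vp - Ii / Vi) - Ip / tp = 0 ∧
  E * (Ip / Vp - Ii / Vi) - Ii / ti = 0 ∧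
  f4 Rg α C5 Vp h3 + I0 - f2 Ub C2 Vg G
    - f3 C3 Vg U0 Um ((1 / C4) * (1 / Vi - 1 / (E * ti))) β Ii * G = 0 ∧
  (Ip - h1) / td = 0 ∧ (h1 - h2) / td = 0 ∧ (h2 - h3) / td = 0

/-- The proportionality constant between interstitial and plasma insulin at
equilibrium: `I_i = c · I_p` with `c = (E/V_p)/(E/V_i + 1/t_i)`. -/
noncomputable def cEq (Vp Vi E ti : ℝ) : ℝ := (E / Vp) / (E / Vi + 1 / ti)

/-- Equilibrium plasma insulin as a function of glucose:
`I_p(G) = f₁(G)/(1/t_p + c/t_i)`. -/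
noncomputable def IpEq (Vp Vi E tp ti Rm Vg C1 a1 G : ℝ) : ℝ :=
  f1 Rm Vg C1 a1 G / (1 / tp + cEq Vp Vi E ti / ti)

/-- The scalar equilibrium function
`g(G) = f₂(G) + f₃(c·I_p(G))·G − f₄(I_p(G)) − I₀` whose unique nonnegative
root is the equilibrium glucose level. -/
noncomputable def gEq (Vp Vi Vg E tp ti Rm a1 C1 C2 C3 C4 C5 Ub U0 Um Rg α β I0
    G : ℝ) : ℝ :=
  f2 Ub C2 Vg G
    + f3 C3 Vg U0 Um ((1 / C4) * (1 / Vi - 1 / (E * ti))) β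
        (cEq Vp Vi E ti * IpEq Vp Vi E tp ti Rm Vg C1 a1 G) * G
    - f4 Rg α C5 Vp (IpEq Vp Vi E tp ti Rm Vg C1 a1 G) - I0

open Set Filter

lemma div_one_add_le_div_one_add {s t : ℝ} (hs : 0 ≤ s) (hst : s ≤ t) :
    s / (1 + s) ≤ t / (1 + t) := by
  rw [div_le_div_iff₀ (by linarith) (by linarith)]
  nlinarith

section RateFunctions

variable {Rm Vg C1 a1 Ub C2 C3 U0 Um κ β Rg α C5 Vp : ℝ}

lemma f1_pos (hRm : 0 < Rm) (G : ℝ) : 0 < f1 Rm Vg C1 a1 G := by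
  unfold f1; positivity

lemma f1_monotone (hRm : 0 ≤ Rm) (hVg : 0 < Vg) (hC1 : 0 < C1) :
    Monotone (f1 Rm Vg C1 a1) := by
  intro x y hxy
  unfold f1
  gcongr

lemma f1_continuous : Continuous (f1 Rm Vg C1 a1) :=
  continuous_const.div (by fun_prop) fun _ ↦ by positivity

lemma f2_zero : f2 Ub C2 Vg 0 = 0 := by
  simp [f2]

lemma f2_strictMono (hUb : 0 < Ub) (hC2 : 0 < C2) (hVg : 0 < Vg) :
    StrictMono (f2 Ub C2 Vg) := by
  intro x y hxy
  unfold f2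
  gcongr

lemma f2_nonneg (hUb : 0 < Ub) (hC2 : 0 < C2) (hVg : 0 < Vg) {G : ℝ} (hG : 0 ≤ G) :
    0 ≤ f2 Ub C2 Vg G :=
  f2_zero (Ub := Ub) (C2 := C2) (Vg := Vg) ▸ (f2_strictMono hUb hC2 hVg).monotone hG

lemma f2_continuous : Continuous (f2 Ub C2 Vg) := by
  unfold f2; fun_prop

lemma f3_ge (hC3 : 0 < C3) (hVg : 0 < Vg) (hU : U0 ≤ Um) (hκ : 0 ≤ κ) {x : ℝ}
    (hx : 0 ≤ x) : U0 / (C3 * Vg) ≤ f3 C3 Vg U0 Um κ β x := by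
  have hUm : 0 ≤ Um - U0 := sub_nonneg.2 hU
  have ht : 0 ≤ (κ * x) ^ β := Real.rpow_nonneg (by positivity) β
  calc U0 / (C3 * Vg) = 1 / (C3 * Vg) * (U0 + 0) := by ring
    _ ≤ f3 C3 Vg U0 Um κ β x := by unfold f3; gcongr; positivity

lemma f3_monotoneOn (hC3 : 0 < C3) (hVg : 0 < Vg) (hU : U0 ≤ Um) (hκ : 0 ≤ κ)
    (hβ : 0 ≤ β) : MonotoneOn (f3 C3 Vg U0 Um κ β) (Ici 0) := by
  intro x hx y _ hxy
  have hUm : 0 ≤ Um - U0 := sub_nonneg.2 hU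
  have hκx : 0 ≤ κ * x := mul_nonneg hκ hx
  unfold f3
  simp only [mul_div_assoc]
  gcongr 1 / (C3 * Vg) * (U0 + (Um - U0) * ?_)
  exact div_one_add_le_div_one_add (Real.rpow_nonneg hκx β)
    (Real.rpow_le_rpow hκx (by gcongr) hβ)

lemma f3_continuousOn (hκ : 0 ≤ κ) (hβ : 0 ≤ β) :
    ContinuousOn (f3 C3 Vg U0 Um κ β) (Ici 0) := by
  have ht : Continuous fun x : ℝ ↦ (κ * x) ^ β :=
    (Real.continuous_rpow_const hβ).comp (continuous_const_mul κ)
  refine continuousOn_const.mul (continuousOn_const.add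
    ((continuousOn_const.mul ht.continuousOn).div (continuousOn_const.add ht.continuousOn)
      fun x hx ↦ ?_))
  have : 0 ≤ (κ * x) ^ β := Real.rpow_nonneg (mul_nonneg hκ hx) β
  positivity

lemma f4_pos (hRg : 0 < Rg) (x : ℝ) : 0 < f4 Rg α C5 Vp x := by
  unfold f4; positivity

lemma f4_le (hRg : 0 ≤ Rg) (x : ℝ) : f4 Rg α C5 Vp x ≤ Rg :=
  div_le_self hRg (le_add_of_nonneg_right (Real.exp_pos _).le)

lemma f4_antitone (hRg : 0 ≤ Rg) (hα : 0 ≤ α) (hC5 : 0 < C5) (hVp : 0 < Vp) :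
    Antitone (f4 Rg α C5 Vp) := by
  intro x y hxy
  unfold f4
  gcongr

lemma f4_continuous : Continuous (f4 Rg α C5 Vp) :=
  continuous_const.div (by fun_prop) fun _ ↦ by positivity

end RateFunctions

section EquilibriumGlucose

variable {Vp Vi Vg E tp ti td Rm a1 C1 C2 C3 C4 C5 Ub U0 Um Rg α β I0 : ℝ}

lemma kappa_pos (hVi : 0 < Vi) (hC4 : 0 < C4) (hEti : Vi < E * ti) :
    0 < (1 / C4) * (1 / Vi - 1 / (E * ti)) :=
  mul_pos (by positivity) (sub_pos.2 (one_div_lt_one_div_of_lt hVi hEti))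

lemma cEq_pos (hVp : 0 < Vp) (hVi : 0 < Vi) (hE : 0 < E) (hti : 0 < ti) :
    0 < cEq Vp Vi E ti := by
  unfold cEq; positivity

lemma IpEq_pos (hVp : 0 < Vp) (hVi : 0 < Vi) (hE : 0 < E) (htp : 0 < tp) (hti : 0 < ti)
    (hRm : 0 < Rm) (G : ℝ) : 0 < IpEq Vp Vi E tp ti Rm Vg C1 a1 G := by
  have := cEq_pos hVp hVi hE hti
  have := f1_pos (Vg := Vg) (C1 := C1) (a1 := a1) hRm G
  unfold IpEq; positivity

lemma IpEq_monotone (hVp : 0 < Vp) (hVi : 0 < Vi) (hE : 0 < E) (htp : 0 < tp)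
    (hti : 0 < ti) (hRm : 0 < Rm) (hVg : 0 < Vg) (hC1 : 0 < C1) :
    Monotone (IpEq Vp Vi E tp ti Rm Vg C1 a1) := by
  have := cEq_pos hVp hVi hE hti
  exact (f1_monotone hRm.le hVg hC1).div_const (by positivity)

lemma gEq_zero_neg (hRg : 0 < Rg) (hI0 : 0 ≤ I0) :
    gEq Vp Vi Vg E tp ti Rm a1 C1 C2 C3 C4 C5 Ub U0 Um Rg α β I0 0 < 0 := by
  have := f4_pos (α := α) (C5 := C5) (Vp := Vp) hRg (IpEq Vp Vi E tp ti Rm Vg C1 a1 0)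
  simp only [gEq, f2_zero, mul_zero]
  linarith

lemma gEq_strictMonoOn (hVp : 0 < Vp) (hVi : 0 < Vi) (hVg : 0 < Vg) (hE : 0 < E)
    (htp : 0 < tp) (hti : 0 < ti) (hRm : 0 < Rm) (hC1 : 0 < C1) (hC2 : 0 < C2)
    (hC3 : 0 < C3) (hC4 : 0 < C4) (hC5 : 0 < C5) (hUb : 0 < Ub) (hU0 : 0 < U0)
    (hRg : 0 < Rg) (hα : 0 < α) (hβ : 0 < β) (hU0Um : U0 < Um) (hEti : Vi < E * ti) :
    StrictMonoOn (gEq Vp Vi Vg E tp ti Rm a1 C1 C2 C3 C4 C5 Ub U0 Um Rg α β I0)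
      (Ici 0) := by
  intro x hx y _ hxy
  have hc := cEq_pos hVp hVi hE hti
  have hκ := kappa_pos hVi hC4 hEti
  have hIp := IpEq_monotone (a1 := a1) hVp hVi hE htp hti hRm hVg hC1 hxy.le
  have hIpx := IpEq_pos (Vg := Vg) (C1 := C1) (a1 := a1) hVp hVi hE htp hti hRm x
  have hf2 := f2_strictMono hUb hC2 hVg hxy
  have hux : 0 ≤ cEq Vp Vi E ti * IpEq Vp Vi E tp ti Rm Vg C1 a1 x := by positivity
  have huxy : cEq Vp Vi E ti * IpEq Vp Vi E tp ti Rm Vg C1 a1 x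
      ≤ cEq Vp Vi E ti * IpEq Vp Vi E tp ti Rm Vg C1 a1 y := by gcongr
  have hf3 := f3_monotoneOn (β := β) hC3 hVg hU0Um.le hκ.le hβ.le hux (hux.trans huxy) huxy
  have hf3x := f3_ge (β := β) hC3 hVg hU0Um.le hκ.le hux
  have hf4 := f4_antitone hRg.le hα.le hC5 hVp hIp
  have huptake := mul_le_mul hf3 hxy.le hx
    ((by positivity : 0 ≤ U0 / (C3 * Vg)).trans (hf3x.trans hf3))
  unfold gEq
  linarith

lemma gEq_continuousOn (hVp : 0 < Vp) (hVi : 0 < Vi) (hE : 0 < E) (htp : 0 < tp)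
    (hti : 0 < ti) (hRm : 0 < Rm) (hC4 : 0 < C4) (hβ : 0 < β) (hEti : Vi < E * ti) :
    ContinuousOn (gEq Vp Vi Vg E tp ti Rm a1 C1 C2 C3 C4 C5 Ub U0 Um Rg α β I0)
      (Ici 0) := by
  have hIp : Continuous (IpEq Vp Vi E tp ti Rm Vg C1 a1) := f1_continuous.div_const _
  have hmaps : MapsTo (fun G ↦ cEq Vp Vi E ti * IpEq Vp Vi E tp ti Rm Vg C1 a1 G)
      univ (Ici 0) := fun G _ ↦
    (mul_pos (cEq_pos hVp hVi hE hti) (IpEq_pos hVp hVi hE htp hti hRm G)).le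
  have hf3 := (f3_continuousOn (C3 := C3) (Vg := Vg) (U0 := U0) (Um := Um)
    (kappa_pos hVi hC4 hEti).le hβ.le).comp_continuous (continuous_const.mul hIp)
    fun G ↦ hmaps (mem_univ G)
  exact (((f2_continuous.add (hf3.mul continuous_id)).sub
    (f4_continuous.comp hIp)).sub continuous_const).continuousOn

lemma gEq_tendsto_atTop (hVp : 0 < Vp) (hVi : 0 < Vi) (hVg : 0 < Vg) (hE : 0 < E)
    (htp : 0 < tp) (hti : 0 < ti) (hRm : 0 < Rm) (hC2 : 0 < C2) (hC3 : 0 < C3)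
    (hC4 : 0 < C4) (hUb : 0 < Ub) (hU0 : 0 < U0) (hRg : 0 < Rg) (hU0Um : U0 < Um)
    (hEti : Vi < E * ti) :
    Tendsto (gEq Vp Vi Vg E tp ti Rm a1 C1 C2 C3 C4 C5 Ub U0 Um Rg α β I0) atTop atTop := by
  have hm : 0 < U0 / (C3 * Vg) := by positivity
  refine tendsto_atTop_mono' _ ?_
    (tendsto_atTop_add_const_right _ (-(Rg + I0)) (tendsto_id.const_mul_atTop hm))
  filter_upwards [eventually_ge_atTop 0] with G hG
  have hc := cEq_pos hVp hVi hE hti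
  have hIp := IpEq_pos (Vg := Vg) (C1 := C1) (a1 := a1) hVp hVi hE htp hti hRm G
  have hf2 := f2_nonneg hUb hC2 hVg hG
  have hf3 := f3_ge (β := β) hC3 hVg hU0Um.le (kappa_pos hVi hC4 hEti).le
    (by positivity : 0 ≤ cEq Vp Vi E ti * IpEq Vp Vi E tp ti Rm Vg C1 a1 G)
  have hf4 := f4_le (α := α) (C5 := C5) (Vp := Vp) hRg.le (IpEq Vp Vi E tp ti Rm Vg C1 a1 G)
  have huptake := mul_le_mul_of_nonneg_right hf3 hG
  simp only [id, gEq]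
  linarith

lemma exists_gEq_eq_zero (hVp : 0 < Vp) (hVi : 0 < Vi) (hVg : 0 < Vg) (hE : 0 < E)
    (htp : 0 < tp) (hti : 0 < ti) (hRm : 0 < Rm) (hC2 : 0 < C2) (hC3 : 0 < C3)
    (hC4 : 0 < C4) (hUb : 0 < Ub) (hU0 : 0 < U0) (hRg : 0 < Rg) (hβ : 0 < β)
    (hU0Um : U0 < Um) (hEti : Vi < E * ti) (hI0 : 0 ≤ I0) :
    ∃ G, 0 ≤ G ∧ gEq Vp Vi Vg E tp ti Rm a1 C1 C2 C3 C4 C5 Ub U0 Um Rg α β I0 G = 0 :=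
  intermediate_value_Ici (gEq_continuousOn hVp hVi hE htp hti hRm hC4 hβ hEti)
    (gEq_tendsto_atTop hVp hVi hVg hE htp hti hRm hC2 hC3 hC4 hUb hU0 hRg hU0Um hEti)
    (gEq_zero_neg hRg hI0).le

lemma IsEquilibrium.f1_eq {Ip Ii G h1 h2 h3 : ℝ}
    (h : IsEquilibrium Vp Vi Vg E tp ti td Rm a1 C1 C2 C3 C4 C5 Ub U0 Um Rg α β I0
      Ip Ii G h1 h2 h3) :
    f1 Rm Vg C1 a1 G = Ip / tp + Ii / ti := by
  linarith [h.1, h.2.1]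

lemma isEquilibrium_iff (hVp : 0 < Vp) (hVi : 0 < Vi) (hE : 0 < E) (htp : 0 < tp)
    (hti : 0 < ti) (htd : 0 < td) {Ip Ii G h1 h2 h3 : ℝ} :
    IsEquilibrium Vp Vi Vg E tp ti td Rm a1 C1 C2 C3 C4 C5 Ub U0 Um Rg α β I0
        Ip Ii G h1 h2 h3 ↔
      h1 = Ip ∧ h2 = Ip ∧ h3 = Ip ∧ Ii = cEq Vp Vi E ti * Ip ∧
        Ip = IpEq Vp Vi E tp ti Rm Vg C1 a1 G ∧
        gEq Vp Vi Vg E tp ti Rm a1 C1 C2 C3 C4 C5 Ub U0 Um Rg α β I0 G = 0 := by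
  have hc := cEq_pos hVp hVi hE hti
  have hc_def : cEq Vp Vi E ti * (E / Vi + 1 / ti) = E / Vp := by
    unfold cEq; field_simp
  have hD : 1 / tp + cEq Vp Vi E ti / ti ≠ 0 := by positivity
  constructor
  · intro h
    have hf1 := h.f1_eq
    obtain ⟨-, e2, e3, e4, e5, e6⟩ := h
    simp only [div_eq_zero_iff, htd.ne', or_false, sub_eq_zero] at e4 e5 e6
    obtain rfl := e4
    obtain rfl := e5
    obtain rfl := e6
    have hIi : Ii = cEq Vp Vi E ti * Ip := by
      have : Ii * (E / Vi + 1 / ti) = cEq Vp Vi E ti * (E / Vi + 1 / ti) * Ip := by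
        rw [hc_def]; linear_combination -e2
      exact mul_right_cancel₀ (by positivity) (this.trans (by ring))
    have hIp : Ip = IpEq Vp Vi E tp ti Rm Vg C1 a1 G := by
      rw [IpEq, eq_div_iff hD, hf1, hIi]
      ring
    refine ⟨rfl, rfl, rfl, hIi, hIp, ?_⟩
    rw [hIi, hIp] at e3
    unfold gEq
    linarith
  · rintro ⟨rfl, rfl, rfl, rfl, rfl, hg⟩
    have hIpD := div_mul_cancel₀ (f1 Rm Vg C1 a1 G) hD
    refine ⟨?_, ?_, ?_, by simp, by simp, by simp⟩
    · rw [← IpEq] at hIpD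
      linear_combination -hIpD + IpEq Vp Vi E tp ti Rm Vg C1 a1 G * hc_def
    · linear_combination -IpEq Vp Vi E tp ti Rm Vg C1 a1 G * hc_def
    · unfold gEq at hg
      linarith

end EquilibriumGlucose

theorem ultradian_unique_equilibrium_general
    (Vp Vi Vg E tp ti td Rm a1 C1 C2 C3 C4 C5 Ub U0 Um Rg α β I0 : ℝ)
    (hVp : 0 < Vp) (hVi : 0 < Vi) (hVg : 0 < Vg) (hE : 0 < E)
    (htp : 0 < tp) (hti : 0 < ti) (htd : 0 < td) (hRm : 0 < Rm)
    (hC1 : 0 < C1) (hC2 : 0 < C2) (hC3 : 0 < C3) (hC4 : 0 < C4) (hC5 : 0 < C5)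
    (hUb : 0 < Ub) (hU0 : 0 < U0) (hRg : 0 < Rg)
    (hα : 0 < α) (hβ : 0 < β) (hU0Um : U0 < Um) (hEti : Vi < E * ti)
    (hI0 : 0 ≤ I0) :
    (∃! p : ℝ × ℝ × ℝ × ℝ × ℝ × ℝ,
      0 ≤ p.2.2.1 ∧
        IsEquilibrium Vp Vi Vg E tp ti td Rm a1 C1 C2 C3 C4 C5 Ub U0 Um Rg α β I0
          p.1 p.2.1 p.2.2.1 p.2.2.2.1 p.2.2.2.2.1 p.2.2.2.2.2) ∧
    (∀ Ip Ii G h1 h2 h3 : ℝ, 0 ≤ G →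
      IsEquilibrium Vp Vi Vg E tp ti td Rm a1 C1 C2 C3 C4 C5 Ub U0 Um Rg α β I0
        Ip Ii G h1 h2 h3 →
      0 < G ∧ 0 < Ip ∧ 0 < Ii) ∧
    (∀ Ip Ii G h1 h2 h3 : ℝ,
      IsEquilibrium Vp Vi Vg E tp ti td Rm a1 C1 C2 C3 C4 C5 Ub U0 Um Rg α β I0
        Ip Ii G h1 h2 h3 →
      Ii = cEq Vp Vi E ti * Ip ∧
      f1 Rm Vg C1 a1 G = Ip / tp + Ii / ti ∧
      Ip = IpEq Vp Vi E tp ti Rm Vg C1 a1 G) ∧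
    StrictMonoOn (gEq Vp Vi Vg E tp ti Rm a1 C1 C2 C3 C4 C5 Ub U0 Um Rg α β I0)
      (Set.Ici 0) ∧
    (∀ Ip Ii G h1 h2 h3 : ℝ, 0 ≤ G →
      IsEquilibrium Vp Vi Vg E tp ti td Rm a1 C1 C2 C3 C4 C5 Ub U0 Um Rg α β I0
        Ip Ii G h1 h2 h3 →
      ∀ G' : ℝ, 0 ≤ G' →
        (gEq Vp Vi Vg E tp ti Rm a1 C1 C2 C3 C4 C5 Ub U0 Um Rg α β I0 G' = 0 ↔
          G' = G)) := by
  have hmono := gEq_strictMonoOn (a1 := a1) (I0 := I0) hVp hVi hVg hE htp hti hRm hC1 hC2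
    hC3 hC4 hC5 hUb hU0 hRg hα hβ hU0Um hEti
  have hchar := @isEquilibrium_iff Vp Vi Vg E tp ti td Rm a1 C1 C2 C3 C4 C5 Ub U0 Um Rg α β I0
    hVp hVi hE htp hti htd
  obtain ⟨G₀, hG₀, hroot⟩ := exists_gEq_eq_zero (α := α) (C5 := C5) (a1 := a1) (C1 := C1)
    hVp hVi hVg hE htp hti hRm hC2 hC3 hC4 hUb hU0 hRg hβ hU0Um hEti hI0
  set Ip₀ := IpEq Vp Vi E tp ti Rm Vg C1 a1 G₀
  refine ⟨⟨(Ip₀, cEq Vp Vi E ti * Ip₀, G₀, Ip₀, Ip₀, Ip₀),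
      ⟨hG₀, hchar.2 ⟨rfl, rfl, rfl, rfl, rfl, hroot⟩⟩, ?_⟩, ?_, ?_, hmono, ?_⟩
  · rintro ⟨Ip, Ii, G, h1, h2, h3⟩ ⟨hG, heq⟩
    dsimp only at hG heq
    obtain ⟨rfl, rfl, rfl, rfl, rfl, hg⟩ := hchar.1 heq
    obtain rfl := hmono.injOn hG hG₀ (hg.trans hroot.symm)
    rfl
  · intro Ip Ii G h1 h2 h3 hG heq
    obtain ⟨-, -, -, rfl, rfl, hg⟩ := hchar.1 heq
    have hIp := IpEq_pos (Vg := Vg) (C1 := C1) (a1 := a1) hVp hVi hE htp hti hRm G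
    refine ⟨hG.lt_of_ne ?_, hIp, mul_pos (cEq_pos hVp hVi hE hti) hIp⟩
    rintro rfl
    exact (gEq_zero_neg hRg hI0).ne hg
  · intro Ip Ii G h1 h2 h3 heq
    obtain ⟨-, -, -, hIi, hIp, -⟩ := hchar.1 heq
    exact ⟨hIi, heq.f1_eq, hIp⟩
  · intro Ip Ii G h1 h2 h3 hG heq G' hG'
    have hg := (hchar.1 heq).2.2.2.2.2
    exact ⟨fun hg' ↦ hmono.injOn hG' hG (hg'.trans hg.symm), fun h ↦ h ▸ hg⟩

/-- The unforced Ultradian model has exactly one equilibrium with `G ≥ 0`, at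
which `G, I_p, I_i > 0`; at any equilibrium `I_i = c·I_p`,
`f₁(G) = I_p/t_p + I_i/t_i`, and `I_p = f₁(G)/(1/t_p + c/t_i)`; and the
equilibrium glucose is the unique nonnegative root of the strictly increasing
function `g`. -/
theorem ultradian_unique_equilibrium
    (Vp Vi Vg E tp ti td Rm a1 C1 C2 C3 C4 C5 Ub U0 Um Rg α β I0 : ℝ)
    (hVp : 0 < Vp) (hVi : 0 < Vi) (hVg : 0 < Vg) (hE : 0 < E)
    (htp : 0 < tp) (hti : 0 < ti) (htd : 0 < td) (hRm : 0 < Rm) (ha1 : 0 < a1)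
    (hC1 : 0 < C1) (hC2 : 0 < C2) (hC3 : 0 < C3) (hC4 : 0 < C4) (hC5 : 0 < C5)
    (hUb : 0 < Ub) (hU0 : 0 < U0) (hUm : 0 < Um) (hRg : 0 < Rg)
    (hα : 0 < α) (hβ : 0 < β) (hU0Um : U0 < Um) (hEti : Vi < E * ti)
    (hI0 : 0 ≤ I0) :
    (∃! p : ℝ × ℝ × ℝ × ℝ × ℝ × ℝ,
      0 ≤ p.2.2.1 ∧
        IsEquilibrium Vp Vi Vg E tp ti td Rm a1 C1 C2 C3 C4 C5 Ub U0 Um Rg α β I0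
          p.1 p.2.1 p.2.2.1 p.2.2.2.1 p.2.2.2.2.1 p.2.2.2.2.2) ∧
    (∀ Ip Ii G h1 h2 h3 : ℝ, 0 ≤ G →
      IsEquilibrium Vp Vi Vg E tp ti td Rm a1 C1 C2 C3 C4 C5 Ub U0 Um Rg α β I0
        Ip Ii G h1 h2 h3 →
      0 < G ∧ 0 < Ip ∧ 0 < Ii) ∧
    (∀ Ip Ii G h1 h2 h3 : ℝ,
      IsEquilibrium Vp Vi Vg E tp ti td Rm a1 C1 C2 C3 C4 C5 Ub U0 Um Rg α β I0
        Ip Ii G h1 h2 h3 →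
      Ii = cEq Vp Vi E ti * Ip ∧
      f1 Rm Vg C1 a1 G = Ip / tp + Ii / ti ∧
      Ip = IpEq Vp Vi E tp ti Rm Vg C1 a1 G) ∧
    StrictMonoOn (gEq Vp Vi Vg E tp ti Rm a1 C1 C2 C3 C4 C5 Ub U0 Um Rg α β I0)
      (Set.Ici 0) ∧
    (∀ Ip Ii G h1 h2 h3 : ℝ, 0 ≤ G →
      IsEquilibrium Vp Vi Vg E tp ti td Rm a1 C1 C2 C3 C4 C5 Ub U0 Um Rg α β I0
        Ip Ii G h1 h2 h3 →
      ∀ G' : ℝ, 0 ≤ G' →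
        (gEq Vp Vi Vg E tp ti Rm a1 C1 C2 C3 C4 C5 Ub U0 Um Rg α β I0 G' = 0 ↔
          G' = G)) :=
  ultradian_unique_equilibrium_general Vp Vi Vg E tp ti td Rm a1 C1 C2 C3 C4 C5 Ub U0 Um Rg α β I0
    hVp hVi hVg hE htp hti htd hRm hC1 hC2 hC3 hC4 hC5 hUb hU0 hRg hα hβ hU0Um hEti hI0
end

section
/- Let λ, τ > 0 with λτ < π/2. Then every complex number γ satisfying the characteristic equation γ + λ e^{−γτ} = 0 has strictly negative real part. -/
/-! If `Re γ ≥ 0`, the equation gives `‖γ‖ = λ e^{-τ Re γ} ≤ λ`, so `|τ Im γ| ≤ λτ < π/2` and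
`cos (τ Im γ) > 0`. Taking real parts, `Re γ = -λ e^{-τ Re γ} cos (τ Im γ) < 0`, a contradiction. -/

namespace Complex

variable {lam tau : ℝ} {γ : ℂ}

lemma norm_eq_of_add_mul_exp_eq_zero (hγ : γ + (lam : ℂ) * exp (-(γ * (tau : ℂ))) = 0) :
    ‖γ‖ = |lam| * Real.exp (-(γ.re * tau)) := by
  conv_lhs => rw [eq_neg_of_add_eq_zero_left hγ]
  simp [norm_exp]

lemma re_eq_of_add_mul_exp_eq_zero (hγ : γ + (lam : ℂ) * exp (-(γ * (tau : ℂ))) = 0) :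
    γ.re = -(lam * Real.exp (-(γ.re * tau)) * Real.cos (γ.im * tau)) := by
  conv_lhs => rw [eq_neg_of_add_eq_zero_left hγ]
  simp [exp_re, mul_assoc]

end Complex

/-- If `λ, τ > 0` and `λτ < π/2`, then every complex root `γ` of the characteristic
equation `γ + λ e^{-γτ} = 0` of the delay equation `ż(t) = -λ z(t-τ)` has
strictly negative real part. -/
theorem char_roots_stable (lam tau : ℝ) (hlam : 0 < lam) (htau : 0 < tau)
    (h : lam * tau < Real.pi / 2) :
    ∀ γ : ℂ, γ + (lam : ℂ) * Complex.exp (-(γ * (tau : ℂ))) = 0 → γ.re < 0 := by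
  intro γ hγ
  by_contra! hre
  have hdecay : Real.exp (-(γ.re * tau)) ≤ 1 :=
    Real.exp_le_one_iff.mpr (neg_nonpos.mpr (mul_nonneg hre htau.le))
  have him : |γ.im| ≤ lam :=
    calc |γ.im| ≤ ‖γ‖ := Complex.abs_im_le_norm γ
      _ = lam * Real.exp (-(γ.re * tau)) := by
        rw [Complex.norm_eq_of_add_mul_exp_eq_zero hγ, abs_of_pos hlam]
      _ ≤ lam := mul_le_of_le_one_right hlam.le hdecay
  have hphase : |γ.im * tau| < Real.pi / 2 :=
    calc |γ.im * tau| = |γ.im| * tau := by rw [abs_mul, abs_of_pos htau]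
      _ ≤ lam * tau := mul_le_mul_of_nonneg_right him htau.le
      _ < Real.pi / 2 := h
  have hcos : 0 < Real.cos (γ.im * tau) :=
    Real.cos_pos_of_mem_Ioo ⟨by linarith [neg_abs_le (γ.im * tau)],
      by linarith [le_abs_self (γ.im * tau)]⟩
  have hre_eq := Complex.re_eq_of_add_mul_exp_eq_zero hγ
  have hpos := mul_pos (mul_pos hlam (Real.exp_pos (-(γ.re * tau)))) hcos
  linarith
end

section
/- Let λ, τ > 0 with λτ > π/2. Then there exists a complex number γ with strictly positive real part satisfying the characteristic equation γ + λ e^{−γτ} = 0. -/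
/-!
Write a candidate root as `γ = x + iy` with `y ≥ 0` and put `r(x) = λ e^{-xτ}`. If `|x| ≤ r(x)`
and `y = √(r(x)² - x²)`, then `-γ = r(x) e^{-iθ}` with `θ = arccos (-x / r(x))`, so `γ` is a root
exactly when `τ y = θ`. The mismatch `G(x) = τ √(r(x)² - x²) - arccos (-x / r(x))` is continuous,
equals `λτ - π/2 > 0` at `0`, and equals `-π` wherever `r(x) < x` (there `√` returns `0` and
`arccos` returns `π`), in particular at `x = λ`. A zero of `G` in `[0, λ]` is therefore positive and lies
where `x ≤ r(x)`, and gives a root.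
-/

open Real

theorem ofReal_mul_exp_neg_arccos_mul_I {r x : ℝ} (hr : 0 < r) (hx : |x| ≤ r) :
    (r : ℂ) * Complex.exp (-(arccos (-x / r) * Complex.I)) = -⟨x, √(r ^ 2 - x ^ 2)⟩ := by
  have hxr : |-x / r| ≤ 1 := by rwa [abs_div, abs_neg, abs_of_pos hr, div_le_one hr]
  have hsin : r * √(1 - (-x / r) ^ 2) = √(r ^ 2 - x ^ 2) := by
    calc r * √(1 - (-x / r) ^ 2) = √(r ^ 2 * (1 - (-x / r) ^ 2)) := by
          rw [sqrt_mul (sq_nonneg r), sqrt_sq hr.le]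
      _ = √(r ^ 2 - x ^ 2) := by field_simp
  apply Complex.ext <;> simp [Complex.exp_re, Complex.exp_im,
    cos_arccos (abs_le.1 hxr).1 (abs_le.1 hxr).2, sin_arccos, hsin, mul_div_cancel₀ _ hr.ne']

theorem mk_add_mul_exp_neg_mul_eq_zero {lam tau x r : ℝ} (hr₀ : 0 < r)
    (hr : lam * exp (-(x * tau)) = r) (hxr : |x| ≤ r)
    (hy : tau * √(r ^ 2 - x ^ 2) = arccos (-x / r)) :
    (⟨x, √(r ^ 2 - x ^ 2)⟩ : ℂ) + lam * Complex.exp (-(⟨x, √(r ^ 2 - x ^ 2)⟩ * tau)) = 0 := by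
  set y := √(r ^ 2 - x ^ 2)
  have hsplit : -((⟨x, y⟩ : ℂ) * tau) = ↑(-(x * tau)) + -(↑(tau * y) * Complex.I) := by
    apply Complex.ext <;> simp [mul_comm]
  rw [hsplit, Complex.exp_add, ← mul_assoc, ← Complex.ofReal_exp, ← Complex.ofReal_mul, hr, hy,
    ofReal_mul_exp_neg_arccos_mul_I hr₀ hxr, add_neg_cancel]

noncomputable def charModulus (lam tau x : ℝ) : ℝ := lam * exp (-(x * tau))

noncomputable def charPhaseGap (lam tau x : ℝ) : ℝ :=
  tau * √(charModulus lam tau x ^ 2 - x ^ 2) - arccos (-x / charModulus lam tau x)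

section

variable {lam : ℝ} (tau : ℝ) (hlam : 0 < lam)
include hlam

theorem charModulus_pos (x : ℝ) : 0 < charModulus lam tau x := mul_pos hlam (exp_pos _)

theorem continuous_charPhaseGap : Continuous (charPhaseGap lam tau) := by
  have hr : Continuous (charModulus lam tau) := by unfold charModulus; fun_prop
  unfold charPhaseGap
  exact (continuous_const.mul ((hr.pow 2).sub (continuous_pow 2)).sqrt).sub
    (continuous_arccos.comp (continuous_neg.div hr fun x => (charModulus_pos tau hlam x).ne'))

theorem charPhaseGap_zero : charPhaseGap lam tau 0 = tau * lam - π / 2 := by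
  simp [charPhaseGap, charModulus, sqrt_sq hlam.le]

theorem charPhaseGap_of_charModulus_lt {x : ℝ} (hx : charModulus lam tau x < x) :
    charPhaseGap lam tau x = -π := by
  have hr := charModulus_pos tau hlam x
  have hsqrt : √(charModulus lam tau x ^ 2 - x ^ 2) = 0 := sqrt_eq_zero'.2 (by nlinarith)
  have harccos : arccos (-x / charModulus lam tau x) = π :=
    arccos_eq_pi.2 (by rw [neg_div, neg_le_neg_iff, one_le_div hr]; exact hx.le)
  simp [charPhaseGap, hsqrt, harccos]

end

theorem char_root_unstable_general (lam tau : ℝ) (hlam : 0 < lam)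
    (h : Real.pi / 2 < lam * tau) :
    ∃ γ : ℂ, 0 < γ.re ∧ γ + (lam : ℂ) * Complex.exp (-(γ * (tau : ℂ))) = 0 := by
  have hG₀ : 0 < charPhaseGap lam tau 0 := by rw [charPhaseGap_zero tau hlam]; linarith
  have hGlam : charPhaseGap lam tau lam < 0 := by
    have hdecay : charModulus lam tau lam < lam :=
      mul_lt_of_lt_one_right hlam (exp_lt_one_iff.2 (by linarith [pi_pos]))
    rw [charPhaseGap_of_charModulus_lt tau hlam hdecay]
    linarith [pi_pos]
  obtain ⟨x, ⟨hx₀, -⟩, hx⟩ := intermediate_value_Icc' hlam.le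
    (continuous_charPhaseGap tau hlam).continuousOn ⟨hGlam.le, hG₀.le⟩
  have hx_pos : 0 < x := hx₀.lt_of_ne (by rintro rfl; exact hG₀.ne' hx)
  have hxr : x ≤ charModulus lam tau x := not_lt.1 fun hlt => by
    rw [charPhaseGap_of_charModulus_lt tau hlam hlt] at hx
    linarith [pi_pos]
  exact ⟨⟨x, _⟩, hx_pos, mk_add_mul_exp_neg_mul_eq_zero (charModulus_pos tau hlam x) rfl
    (abs_le.2 ⟨by linarith, hxr⟩) (sub_eq_zero.1 hx)⟩

/-- If `λ, τ > 0` and `λτ > π/2`, then the characteristic equation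
`γ + λ e^{-γτ} = 0` of the delay equation `ż(t) = -λ z(t-τ)` has a root with
strictly positive real part. -/
theorem char_root_unstable (lam tau : ℝ) (hlam : 0 < lam) (htau : 0 < tau)
    (h : Real.pi / 2 < lam * tau) :
    ∃ γ : ℂ, 0 < γ.re ∧ γ + (lam : ℂ) * Complex.exp (-(γ * (tau : ℂ))) = 0 :=
  char_root_unstable_general lam tau hlam h
end

section
/- Let λ, τ > 0 and ω > 0. The purely imaginary number γ = iω satisfies the characteristic equation γ + λ e^{−γτ} = 0 if and only if ω = λ and λτ = π/2 + 2kπ for some nonnegative integer k. -/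
/-!
Writing `e^{-iωτ} = cos(ωτ) - i sin(ωτ)`, the real part of `iω + λ e^{-iωτ}` is `λ cos(ωτ)` and
its imaginary part is `ω - λ sin(ωτ)`. So `iω` is a root iff `cos(ωτ) = 0` and `ω = λ sin(ωτ)`;
positivity of `ω` and `λ` forces `sin(ωτ) = 1`, hence `ω = λ`, and `λτ > 0` selects the
solutions `π/2 + 2kπ` of `sin = 1` with `k ≥ 0`.
-/

open Complex in
theorem Complex.I_mul_add_mul_exp_neg_I_mul_eq_zero_iff {ω lam : ℝ} (hlam : lam ≠ 0) (s : ℝ) :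
    I * ω + lam * exp (-(I * s)) = 0 ↔ Real.cos s = 0 ∧ ω = lam * Real.sin s := by
  have hexp : exp (-(I * s)) = Real.cos s - Real.sin s * I := by
    rw [show -(I * s) = (-s : ℝ) * I by push_cast; ring, exp_mul_I, ← ofReal_cos, ← ofReal_sin,
      Real.cos_neg, Real.sin_neg]
    push_cast
    ring
  rw [hexp, Complex.ext_iff]
  simp only [add_re, add_im, mul_re, mul_im, sub_re, sub_im, I_re, I_im, ofReal_re, ofReal_im,
    zero_re, zero_im]
  constructor
  · rintro ⟨hre, him⟩
    exact ⟨(mul_eq_zero.1 (by linarith)).resolve_left hlam, by linarith⟩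
  · rintro ⟨hcos, rfl⟩
    constructor <;> simp [hcos]

namespace Real

theorem cos_eq_zero_and_sin_pos_iff {x : ℝ} : cos x = 0 ∧ 0 < sin x ↔ sin x = 1 := by
  refine ⟨fun ⟨hcos, hsin⟩ => ?_, fun h => ⟨cos_eq_zero_iff_sin_eq.2 (.inl h), by simp [h]⟩⟩
  exact (cos_eq_zero_iff_sin_eq.1 hcos).resolve_right (by linarith)

theorem sin_eq_one_iff_of_pos {x : ℝ} (hx : 0 < x) :
    sin x = 1 ↔ ∃ k : ℕ, x = π / 2 + 2 * k * π := by
  rw [sin_eq_one_iff]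
  constructor
  · rintro ⟨k, rfl⟩
    have hk : 0 ≤ k := by
      by_contra! hk
      have : (k : ℝ) ≤ -1 := by exact_mod_cast Int.le_sub_one_of_lt hk
      nlinarith [pi_pos]
    lift k to ℕ using hk
    exact ⟨k, by push_cast; ring⟩
  · rintro ⟨k, rfl⟩
    exact ⟨k, by push_cast; ring⟩

end Real

/-- For `λ, τ, ω > 0`, the purely imaginary number `γ = iω` satisfies the
characteristic equation `γ + λ e^{-γτ} = 0` if and only if `ω = λ` and
`λτ = π/2 + 2kπ` for some nonnegative integer `k`. -/
theorem char_root_imaginary (lam tau ω : ℝ) (hlam : 0 < lam) (htau : 0 < tau)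
    (hω : 0 < ω) :
    (Complex.I * (ω : ℂ) + (lam : ℂ) *
        Complex.exp (-(Complex.I * (ω : ℂ) * (tau : ℂ))) = 0) ↔
      (ω = lam ∧ ∃ k : ℕ, lam * tau = Real.pi / 2 + 2 * (k : ℝ) * Real.pi) := by
  rw [mul_assoc, ← Complex.ofReal_mul,
    Complex.I_mul_add_mul_exp_neg_I_mul_eq_zero_iff hlam.ne']
  constructor
  · rintro ⟨hcos, hω_eq⟩
    have hsin : Real.sin (ω * tau) = 1 :=
      Real.cos_eq_zero_and_sin_pos_iff.1 ⟨hcos, pos_of_mul_pos_right (hω_eq ▸ hω) hlam.le⟩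
    obtain rfl : ω = lam := by rw [hω_eq, hsin, mul_one]
    exact ⟨rfl, (Real.sin_eq_one_iff_of_pos (mul_pos hlam htau)).1 hsin⟩
  · rintro ⟨rfl, hk⟩
    have hsin := (Real.sin_eq_one_iff_of_pos (mul_pos hω htau)).2 hk
    exact ⟨(Real.cos_eq_zero_and_sin_pos_iff.2 hsin).1, by rw [hsin, mul_one]⟩
end

section
/- Let t_d > 0 and let u : [0, ∞) → ℝ be continuous. Suppose h₁, h₂, h₃ : [0, ∞) → ℝ are differentiable, satisfy h₁'(t) = (u(t) − h₁(t))/t_d, h₂'(t) = (h₁(t) − h₂(t))/t_d, h₃'(t) = (h₂(t) − h₃(t))/t_d for all t ≥ 0, and h₁(0) = h₂(0) = h₃(0) = 0. Then for every t ≥ 0, h₃(t) = ∫₀ᵗ (s²/(2 t_d³)) e^{−s/t_d} u(t − s) ds. -/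
/-!
Multiplying the `k`-th stage by the integrating factor `e^{t/t_d}` turns `H_k = h_k e^{t/t_d}`
into an iterated primitive: `H₁' = e^{t/t_d} u / t_d` and `H_{k+1}' = H_k / t_d`, all vanishing
at `0`. By Cauchy's formula for repeated integration,
`H₃(t) = (2 t_d³)⁻¹ ∫₀ᵗ (t - r)² e^{r/t_d} u(r) dr`, and the substitution `s = t - r` gives the
Erlang convolution.
-/

open intervalIntegral Set Real

/-- `n!` times the `(n + 1)`-fold iterated primitive of `w` from `a` (Cauchy's formula). -/
noncomputable def powKernelIntegral (n : ℕ) (a : ℝ) (w : ℝ → ℝ) (t : ℝ) : ℝ :=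
  ∫ s in a..t, (t - s) ^ n * w s

section powKernelIntegral

variable {w : ℝ → ℝ} {a : ℝ}

theorem hasDerivAt_powKernelIntegral_zero (hw : Continuous w) (t : ℝ) :
    HasDerivAt (powKernelIntegral 0 a w) (w t) t := by
  have h : powKernelIntegral 0 a w = fun t => ∫ s in a..t, w s := by
    ext; simp [powKernelIntegral]
  exact h ▸ (hw.integral_hasStrictDerivAt a t).hasDerivAt

/-- Integration by parts against the primitive `∫ₐˢ w`; both boundary terms vanish. -/
theorem powKernelIntegral_succ_eq (hw : Continuous w) (n : ℕ) (t : ℝ) :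
    powKernelIntegral (n + 1) a w t =
      (n + 1) * powKernelIntegral n a (fun s => ∫ r in a..s, w r) t := by
  have hu : ∀ s ∈ uIcc a t, HasDerivAt (fun s => (t - s) ^ (n + 1))
      (-((n + 1) * (t - s) ^ n)) s := fun s _ => by
    simpa [Function.comp_def] using ((hasDerivAt_id s).const_sub t).fun_pow (n + 1)
  have hW : ∀ s ∈ uIcc a t, HasDerivAt (fun s => ∫ r in a..s, w r) (w s) s :=
    fun s _ => (hw.integral_hasStrictDerivAt a s).hasDerivAt
  rw [powKernelIntegral, integral_mul_deriv_eq_deriv_mul hu hW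
    (Continuous.intervalIntegrable (by fun_prop) _ _) (hw.intervalIntegrable _ _),
    powKernelIntegral, ← integral_const_mul]
  simp [mul_assoc]

theorem hasDerivAt_powKernelIntegral_primitive (hw : Continuous w) (n : ℕ) (t : ℝ) :
    HasDerivAt (powKernelIntegral n a fun s => ∫ r in a..s, w r)
      (powKernelIntegral n a w t) t := by
  have hW : Continuous fun s => ∫ r in a..s, w r := continuous_primitive hw.intervalIntegrable a
  induction n generalizing w with
  | zero => simpa [powKernelIntegral] using hasDerivAt_powKernelIntegral_zero hW t
  | succ n ih =>
    rw [powKernelIntegral_succ_eq hw]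
    simpa only [funext (powKernelIntegral_succ_eq hW n)] using
      (ih hW (continuous_primitive hW.intervalIntegrable a)).const_mul ((n : ℝ) + 1)

theorem hasDerivAt_powKernelIntegral_succ (hw : Continuous w) (n : ℕ) (t : ℝ) :
    HasDerivAt (powKernelIntegral (n + 1) a w) ((n + 1) * powKernelIntegral n a w t) t := by
  simpa only [funext (powKernelIntegral_succ_eq hw n)] using
    (hasDerivAt_powKernelIntegral_primitive hw n t).const_mul ((n : ℝ) + 1)

end powKernelIntegral

theorem mul_exp_div_eq_of_hasDerivWithinAt {τ : ℝ} {f g F : ℝ → ℝ}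
    (hf : ∀ t ∈ Ici (0 : ℝ), HasDerivWithinAt f ((g t - f t) / τ) (Ici 0) t)
    (hF : ∀ t ∈ Ici (0 : ℝ), HasDerivWithinAt F (g t * exp (t / τ) / τ) (Ici 0) t)
    (hf0 : f 0 = 0) (hF0 : F 0 = 0) :
    ∀ t ∈ Ici (0 : ℝ), f t * exp (t / τ) = F t := by
  have hfe : ∀ t ∈ Ici (0 : ℝ),
      HasDerivWithinAt (fun s => f s * exp (s / τ)) (g t * exp (t / τ) / τ) (Ici 0) t :=
    fun t ht => ((hf t ht).mul ((hasDerivAt_id t).div_const τ).exp.hasDerivWithinAt).congr_deriv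
      (by simp only [id_eq]; ring)
  have hcont : ∀ {φ φ' : ℝ → ℝ},
      (∀ t ∈ Ici (0 : ℝ), HasDerivWithinAt φ (φ' t) (Ici 0) t) → ContinuousOn φ (Ici 0) :=
    fun h t ht => (h t ht).continuousWithinAt
  intro t ht
  refine eq_of_has_deriv_right_eq (a := 0) (b := t)
    (fun s hs => (hfe s hs.1).mono (Ici_subset_Ici.2 hs.1))
    (fun s hs => (hF s hs.1).mono (Ici_subset_Ici.2 hs.1))
    ((hcont hfe).mono Icc_subset_Ici_self) ((hcont hF).mono Icc_subset_Ici_self)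
    (by simp [hf0, hF0]) t ⟨ht, le_rfl⟩

theorem exp_mul_powKernelIntegral_exp_mul (τ : ℝ) (v : ℝ → ℝ) (n : ℕ) (t : ℝ) :
    exp (-t / τ) * powKernelIntegral n 0 (fun s => exp (s / τ) * v s) t =
      ∫ s in (0 : ℝ)..t, s ^ n * exp (-s / τ) * v (t - s) := by
  calc exp (-t / τ) * powKernelIntegral n 0 (fun s => exp (s / τ) * v s) t
      = ∫ r in (0 : ℝ)..t, (t - r) ^ n * exp (-(t - r) / τ) * v r := by
        rw [powKernelIntegral, ← integral_const_mul]
        congr 1 with r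
        rw [show -(t - r) / τ = -t / τ + r / τ by ring, exp_add]
        ring
    _ = ∫ s in (0 : ℝ)..t, s ^ n * exp (-s / τ) * v (t - s) := by
        have h := integral_comp_sub_left (a := 0) (b := t)
          (fun r => (t - r) ^ n * exp (-(t - r) / τ) * v r) t
        simp only [sub_sub_cancel, sub_self, sub_zero] at h
        exact h.symm

theorem three_stage_filter_erlang_general (td : ℝ) (u h1 h2 h3 : ℝ → ℝ)
    (hu : ContinuousOn u (Set.Ici 0))
    (hd1 : ∀ t ∈ Set.Ici (0 : ℝ),
      HasDerivWithinAt h1 ((u t - h1 t) / td) (Set.Ici 0) t)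
    (hd2 : ∀ t ∈ Set.Ici (0 : ℝ),
      HasDerivWithinAt h2 ((h1 t - h2 t) / td) (Set.Ici 0) t)
    (hd3 : ∀ t ∈ Set.Ici (0 : ℝ),
      HasDerivWithinAt h3 ((h2 t - h3 t) / td) (Set.Ici 0) t)
    (h10 : h1 0 = 0) (h20 : h2 0 = 0) (h30 : h3 0 = 0) :
    ∀ t : ℝ, 0 ≤ t →
      h3 t = ∫ s in (0 : ℝ)..t,
        (s ^ 2 / (2 * td ^ 3)) * Real.exp (-s / td) * u (t - s) := by
  intro t ht
  set v : ℝ → ℝ := fun s => u (max s 0)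
  have hv : Continuous v := hu.comp_continuous (by fun_prop) fun s => le_max_right s 0
  have hvu : ∀ s ∈ Ici (0 : ℝ), v s = u s := fun s hs => by simp [v, max_eq_left hs.out]
  set w : ℝ → ℝ := fun s => exp (s / td) * v s
  have hw : Continuous w := by fun_prop
  have e1 : ∀ s ∈ Ici (0 : ℝ), h1 s * exp (s / td) = powKernelIntegral 0 0 w s / td := by
    refine mul_exp_div_eq_of_hasDerivWithinAt (fun r hr => hvu r hr ▸ hd1 r hr) (fun r _ => ?_)
      h10 (by simp [powKernelIntegral])
    refine ((hasDerivAt_powKernelIntegral_zero hw r).div_const td).hasDerivWithinAt.congr_deriv ?_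
    simp only [w]; ring
  have e2 : ∀ s ∈ Ici (0 : ℝ), h2 s * exp (s / td) = powKernelIntegral 1 0 w s / td ^ 2 := by
    refine mul_exp_div_eq_of_hasDerivWithinAt hd2 (fun r hr => ?_) h20 (by simp [powKernelIntegral])
    refine ((hasDerivAt_powKernelIntegral_succ hw 0 r).div_const _).hasDerivWithinAt.congr_deriv ?_
    rw [mul_comm, e1 r hr]; push_cast; ring
  have e3 : ∀ s ∈ Ici (0 : ℝ),
      h3 s * exp (s / td) = powKernelIntegral 2 0 w s / (2 * td ^ 3) := by
    refine mul_exp_div_eq_of_hasDerivWithinAt hd3 (fun r hr => ?_) h30 (by simp [powKernelIntegral])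
    refine ((hasDerivAt_powKernelIntegral_succ hw 1 r).div_const _).hasDerivWithinAt.congr_deriv ?_
    rw [mul_comm, e2 r hr]; push_cast; ring
  calc h3 t = exp (-t / td) * (h3 t * exp (t / td)) := by
        rw [mul_left_comm, ← exp_add, neg_div, neg_add_cancel, exp_zero, mul_one]
    _ = (2 * td ^ 3)⁻¹ * (exp (-t / td) * powKernelIntegral 2 0 w t) := by
        rw [e3 t ht]; ring
    _ = (2 * td ^ 3)⁻¹ * ∫ s in (0 : ℝ)..t, s ^ 2 * exp (-s / td) * v (t - s) := by
        rw [exp_mul_powKernelIntegral_exp_mul]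
    _ = _ := by
        rw [← integral_const_mul]
        refine integral_congr fun s hs => ?_
        rw [uIcc_of_le ht] at hs
        simp only [hvu (t - s) (sub_nonneg.2 hs.2)]
        ring

/-- The three-stage linear filter `h₁' = (u - h₁)/t_d`, `h₂' = (h₁ - h₂)/t_d`,
`h₃' = (h₂ - h₃)/t_d` with zero initial conditions, driven by a continuous
input `u`, has output `h₃(t) = ∫₀ᵗ (s²/(2 t_d³)) e^{-s/t_d} u(t-s) ds`
(convolution with the Erlang kernel). -/
theorem three_stage_filter_erlang (td : ℝ) (htd : 0 < td) (u h1 h2 h3 : ℝ → ℝ)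
    (hu : ContinuousOn u (Set.Ici 0))
    (hd1 : ∀ t ∈ Set.Ici (0 : ℝ),
      HasDerivWithinAt h1 ((u t - h1 t) / td) (Set.Ici 0) t)
    (hd2 : ∀ t ∈ Set.Ici (0 : ℝ),
      HasDerivWithinAt h2 ((h1 t - h2 t) / td) (Set.Ici 0) t)
    (hd3 : ∀ t ∈ Set.Ici (0 : ℝ),
      HasDerivWithinAt h3 ((h2 t - h3 t) / td) (Set.Ici 0) t)
    (h10 : h1 0 = 0) (h20 : h2 0 = 0) (h30 : h3 0 = 0) :
    ∀ t : ℝ, 0 ≤ t →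
      h3 t = ∫ s in (0 : ℝ)..t,
        (s ^ 2 / (2 * td ^ 3)) * Real.exp (-s / td) * u (t - s) :=
  three_stage_filter_erlang_general td u h1 h2 h3 hu hd1 hd2 hd3 h10 h20 h30
end
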